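/- Let p ≥ 4 with p ≡ 1 (mod 3), and let G be a graph of order p+5 of size ex(p+5, B_p) = (p+2)(p+5)/2 not containing B_p. Then the complement of G is 2-regular; moreover G is the complement of the disjoint union of (p+5)/3 triangles, i.e., G is the complete multipartite graph with (p+5)/3 parts of size 3. -/

import Mathlib

open SimpleGraph

/-- A graph contains the book `B_p` iff some edge has at least `p` common neighbors. -/
def SimpleGraph.ContainsBook {V : Type*} (G : SimpleGraph V) (p : ℕ) : Prop :=
  ∃ x y, G.Adj x y ∧ p ≤ (G.commonNeighbors x y).ncard

/-- The Turán number `ex(n, B_p)`: the maximum number of edges of a simple graph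
on `n` vertices containing no book `B_p`. -/
noncomputable def bookTuranNumber (n p : ℕ) : ℕ :=
  sSup {e : ℕ | ∃ G : SimpleGraph (Fin n), ¬ G.ContainsBook p ∧ G.edgeSet.ncard = e}

/-- The disjoint union of `m` copies of the complete graph `K_k`. -/
def unionComplete (m k : ℕ) : SimpleGraph (Fin m × Fin k) :=
  SimpleGraph.fromRel fun a b => a.1 = b.1

/-- The join `G ∨ H` of two graphs. -/
def SimpleGraph.join {α β : Type*} (G : SimpleGraph α) (H : SimpleGraph β) :
    SimpleGraph (α ⊕ β) := (Gᶜ ⊕g Hᶜ)ᶜ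

/-- A disjoint union of cycles `C_{i 0} + ⋯ + C_{i (t-1)}`. -/
def cycleFamily (t : ℕ) (i : Fin t → ℕ) : SimpleGraph (Σ j : Fin t, Fin (i j)) :=
  SimpleGraph.fromRel fun a b => ∃ h : a.1 = b.1, (SimpleGraph.cycleGraph (i b.1)).Adj (h ▸ a.2) b.2

/-!
Write `H = Gᶜ`. Since `G` has `(n - 3) n / 2` edges on `n = p + 5` vertices, `H` has exactly `n`
edges, i.e. average degree `2`. Every vertex outside `{x, y} ∪ N_H(x) ∪ N_H(y)` is a common
`G`-neighbour of `x` and `y`, so for a `G`-edge `xy` the absence of `B_p` forces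
`|N_H(x) ∪ N_H(y)| ≥ 4`. A vertex of `H`-degree at most `1` would then push the degree of all
`n - 2` vertices outside its closed `H`-neighbourhood to at least `3`, exceeding the degree sum
`2n` once `n > 6`; hence `H` is `2`-regular. Now `|N_H(x) ∪ N_H(y)| ≥ 4` says that the
`H`-neighbourhoods of `G`-adjacent vertices are disjoint, so non-adjacency in `G` is transitive:
`G` is complete multipartite, with parts `{v} ∪ N_H(v)` of size `3`.
-/

open Finset

namespace SimpleGraph

variable {V : Type*}

section Finite

variable [Fintype V]

theorem ncard_neighborSet_eq_degree (G : SimpleGraph V) [DecidableRel G.Adj] (v : V) :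
    (G.neighborSet v).ncard = G.degree v := by
  rw [Set.ncard_eq_toFinset_card']
  exact G.card_neighborFinset_eq_degree v

variable [DecidableEq V]

theorem card_edgeFinset_add_card_edgeFinset_compl (G : SimpleGraph V) [DecidableRel G.Adj] :
    #G.edgeFinset + #Gᶜ.edgeFinset = (Fintype.card V).choose 2 := by
  rw [← card_union_of_disjoint (disjoint_edgeFinset.2 disjoint_compl_right), ← edgeFinset_sup]
  convert card_edgeFinset_top_eq_card_choose_two (V := V)
  exact sup_compl_eq_top

theorem card_edgeFinset_compl_eq_card (G : SimpleGraph V) [DecidableRel G.Adj]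
    (hV : 3 ≤ Fintype.card V)
    (hG : G.edgeSet.ncard = (Fintype.card V - 3) * Fintype.card V / 2) :
    #Gᶜ.edgeFinset = Fintype.card V := by
  have hsplit : Fintype.card V * (Fintype.card V - 1) =
      (Fintype.card V - 3) * Fintype.card V + Fintype.card V * 2 := by
    zify [hV, (by omega : 1 ≤ Fintype.card V)]
    ring
  have h := G.card_edgeFinset_add_card_edgeFinset_compl
  rw [← coe_edgeFinset, Set.ncard_coe_finset] at hG
  rw [hG, Nat.choose_two_right, hsplit, Nat.add_mul_div_right _ _ two_pos] at h
  omega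

theorem card_le_ncard_commonNeighbors_add_card_union (G : SimpleGraph V) [DecidableRel G.Adj]
    (x y : V) : Fintype.card V ≤
      (G.commonNeighbors x y).ncard + #(Gᶜ.neighborFinset x ∪ Gᶜ.neighborFinset y) + 2 := by
  have hcover : (univ : Finset V) ⊆ (G.commonNeighbors x y).toFinset ∪
      (Gᶜ.neighborFinset x ∪ Gᶜ.neighborFinset y) ∪ {x, y} := by
    intro z _
    simp only [mem_union, Set.mem_toFinset, mem_commonNeighbors, mem_neighborFinset, compl_adj,
      mem_insert, mem_singleton]
    tauto
  calc Fintype.card V ≤ #((G.commonNeighbors x y).toFinset ∪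
        (Gᶜ.neighborFinset x ∪ Gᶜ.neighborFinset y) ∪ {x, y}) := card_le_card hcover
    _ ≤ _ := by
      rw [Set.ncard_eq_toFinset_card']
      exact (card_union_le _ _).trans (add_le_add (card_union_le _ _) card_le_two)

theorem card_le_add_card_compl_neighborFinset_union {G : SimpleGraph V} [DecidableRel G.Adj]
    {p : ℕ} (hfree : ¬ G.ContainsBook p) {x y : V} (hxy : G.Adj x y) :
    Fintype.card V ≤ p + 1 + #(Gᶜ.neighborFinset x ∪ Gᶜ.neighborFinset y) := by
  have := G.card_le_ncard_commonNeighbors_add_card_union x y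
  have := not_le.1 fun h => hfree ⟨x, y, hxy, h⟩
  omega

theorem ncard_setOf_not_adj (G : SimpleGraph V) [DecidableRel G.Adj] (v : V) :
    {w | ¬ G.Adj v w}.ncard = Gᶜ.degree v + 1 := by
  have : {w | ¬ G.Adj v w} = insert v (Gᶜ.neighborSet v) := by
    ext w
    by_cases hvw : v = w <;> simp [hvw, eq_comm]
  rw [this, Set.ncard_insert_of_notMem (notMem_neighborSet_self _), ncard_neighborSet_eq_degree]

variable (H : SimpleGraph V) [DecidableRel H.Adj] {d : ℕ}

theorem le_degree_of_sum_degrees_eq (hn : d * (d + 1) < Fintype.card V)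
    (hsum : ∑ v, H.degree v = d * Fintype.card V)
    (hnonadj : ∀ x y, x ≠ y → ¬ H.Adj x y → 2 * d ≤ H.degree x + H.degree y) (v : V) :
    d ≤ H.degree v := by
  by_contra! hv
  set S := (insert v (H.neighborFinset v))ᶜ
  have hS : Fintype.card V - d ≤ #S := by
    rw [card_compl]
    have := card_insert_le v (H.neighborFinset v)
    rw [card_neighborFinset_eq_degree] at this
    omega
  have hdeg : ∀ u ∈ S, d + 1 ≤ H.degree u := by
    intro u hu
    simp only [S, mem_compl, mem_insert, mem_neighborFinset, not_or] at hu
    have := hnonadj v u (Ne.symm hu.1) hu.2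
    omega
  have hsumS := calc (d + 1) * (Fintype.card V - d) ≤ #S * (d + 1) := by rw [mul_comm]; gcongr
    _ ≤ ∑ u ∈ S, H.degree u := card_nsmul_le_sum S _ _ hdeg
    _ ≤ ∑ u, H.degree u := sum_le_sum_of_subset (subset_univ S)
    _ = d * Fintype.card V := hsum
  have hd : d ≤ Fintype.card V := by nlinarith
  zify [hd] at hsumS
  nlinarith

theorem isRegularOfDegree_of_sum_degrees_eq (hn : d * (d + 1) < Fintype.card V)
    (hsum : ∑ v, H.degree v = d * Fintype.card V)
    (hnonadj : ∀ x y, x ≠ y → ¬ H.Adj x y → 2 * d ≤ H.degree x + H.degree y) :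
    H.IsRegularOfDegree d := by
  have hle := H.le_degree_of_sum_degrees_eq hn hsum hnonadj
  have := (sum_eq_sum_iff_of_le fun v _ => hle v).1
    (by rw [hsum, sum_const, card_univ, smul_eq_mul, mul_comm])
  exact fun v => (this v (mem_univ v)).symm

variable {H} in
theorem IsRegularOfDegree.disjoint_neighborSet (hH : H.IsRegularOfDegree d) {x y : V}
    (h : 2 * d ≤ #(H.neighborFinset x ∪ H.neighborFinset y)) :
    Disjoint (H.neighborSet x) (H.neighborSet y) := by
  have hcard : #(H.neighborFinset x) + #(H.neighborFinset y) = 2 * d := by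
    rw [card_neighborFinset_eq_degree, card_neighborFinset_eq_degree, hH x, hH y, two_mul]
  have hdisj : Disjoint (H.neighborFinset x) (H.neighborFinset y) :=
    card_union_eq_card_add_card.1 (le_antisymm (card_union_le _ _) (hcard ▸ h))
  rwa [← disjoint_coe, coe_neighborFinset, coe_neighborFinset] at hdisj

end Finite

theorem isCompleteMultipartite_of_disjoint_compl_neighborSet {G : SimpleGraph V}
    (h : ∀ x y, G.Adj x y → Disjoint (Gᶜ.neighborSet x) (Gᶜ.neighborSet y)) :
    G.IsCompleteMultipartite := by
  refine ⟨fun u v w huv hvw huw => ?_⟩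
  obtain rfl | hne_uv := eq_or_ne u v
  · exact hvw huw
  obtain rfl | hne_vw := eq_or_ne v w
  · exact huv huw
  exact Set.disjoint_left.1 (h u w huw) (show Gᶜ.Adj u v from ⟨hne_uv, huv⟩)
    (show Gᶜ.Adj w v from ⟨hne_vw.symm, fun h => hvw h.symm⟩)

def completeMultipartiteGraph.congr {ι ι' : Type*} {P : ι → Type*} {Q : ι' → Type*}
    (e : ι ≃ ι') (f : ∀ i, P i ≃ Q (e i)) :
    completeMultipartiteGraph P ≃g completeMultipartiteGraph Q where
  __ := Equiv.sigmaCongr e f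
  map_rel_iff' := by simp [Equiv.sigmaCongr, Equiv.sigmaCongrLeft, Equiv.sigmaCongrRight]

theorem IsCompleteMultipartite.nonempty_iso_completeEquipartiteGraph [Finite V]
    {G : SimpleGraph V} (h : G.IsCompleteMultipartite) {t : ℕ}
    (ht : ∀ v, {w | ¬ G.Adj v w}.ncard = t) :
    Nonempty (G ≃g completeEquipartiteGraph (Nat.card V / t) t) := by
  let eParts (c : Quotient h.setoid) : {x // h.setoid.r c.out x} ≃ Fin t :=
    (Finite.equivFin _).trans (finCongr (by rw [← ht c.out]; rfl))
  have hV : Nat.card V = Nat.card (Quotient h.setoid) * t := by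
    rw [Nat.card_congr (h.iso.toEquiv.trans ((Equiv.sigmaCongrRight eParts).trans
      (Equiv.sigmaEquivProd _ _))), Nat.card_prod, Nat.card_fin]
  have hQ : Nat.card (Quotient h.setoid) = Nat.card V / t := by
    rcases t.eq_zero_or_pos with rfl | ht0
    · have : IsEmpty V :=
        ⟨fun v => ((Set.ncard_pos (Set.toFinite _)).2 ⟨v, G.irrefl⟩).ne' (ht v)⟩
      simp
    · rw [hV, Nat.mul_div_cancel _ ht0]
  exact ⟨h.iso.trans <| (completeMultipartiteGraph.congr ((Finite.equivFin _).trans (finCongr hQ))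
    fun c => eParts c).trans completeEquipartiteGraph.completeMultipartiteGraph.symm⟩

end SimpleGraph

theorem compl_unionComplete (m k : ℕ) :
    (unionComplete m k)ᶜ = completeEquipartiteGraph m k := by
  ext a b
  simp only [compl_adj, unionComplete, fromRel_adj, completeEquipartiteGraph_adj]
  constructor
  · rintro ⟨hne, h⟩ heq
    exact h ⟨hne, Or.inl heq⟩
  · intro h
    exact ⟨fun hab => h (congrArg Prod.fst hab),
      fun ⟨_, h'⟩ => h'.elim h fun h' => h h'.symm⟩

theorem stmt18_general (p : ℕ) (hp : 4 ≤ p) {V : Type*} [Fintype V]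
    (hV : Fintype.card V = p + 5) (G : SimpleGraph V) (hfree : ¬ G.ContainsBook p)
    (hsize : G.edgeSet.ncard = (p + 2) * (p + 5) / 2) :
    (∀ v : V, (Gᶜ.neighborSet v).ncard = 2) ∧
      Nonempty (G ≃g (unionComplete ((p + 5) / 3) 3)ᶜ) := by
  classical
  have hunion x y (hxy : G.Adj x y) : 4 ≤ #(Gᶜ.neighborFinset x ∪ Gᶜ.neighborFinset y) := by
    have := card_le_add_card_compl_neighborFinset_union hfree hxy
    omega
  have hcompl : #Gᶜ.edgeFinset = p + 5 := by
    rw [← hV]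
    exact G.card_edgeFinset_compl_eq_card (by omega) (by rw [hsize, hV]; rfl)
  have hreg : Gᶜ.IsRegularOfDegree 2 := by
    refine Gᶜ.isRegularOfDegree_of_sum_degrees_eq (by omega)
      (by rw [sum_degrees_eq_twice_card_edges, hcompl, hV]) fun x y hne hxy => ?_
    rw [← card_neighborFinset_eq_degree, ← card_neighborFinset_eq_degree]
    exact (hunion x y (not_not.1 fun h => hxy ⟨hne, h⟩)).trans (card_union_le _ _)
  have hmultipartite : G.IsCompleteMultipartite :=
    isCompleteMultipartite_of_disjoint_compl_neighborSet fun x y hxy =>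
      hreg.disjoint_neighborSet (hunion x y hxy)
  refine ⟨fun v => by rw [ncard_neighborSet_eq_degree, hreg v], ?_⟩
  rw [compl_unionComplete, ← hV, ← Nat.card_eq_fintype_card]
  exact hmultipartite.nonempty_iso_completeEquipartiteGraph fun v => by
    rw [ncard_setOf_not_adj, hreg v]

theorem stmt18 (p : ℕ) (hp : 4 ≤ p) (hmod : p % 3 = 1) {V : Type*} [Fintype V]
    (hV : Fintype.card V = p + 5) (G : SimpleGraph V) (hfree : ¬ G.ContainsBook p)
    (hsize : G.edgeSet.ncard = (p + 2) * (p + 5) / 2) :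
    (∀ v : V, (Gᶜ.neighborSet v).ncard = 2) ∧
      Nonempty (G ≃g (unionComplete ((p + 5) / 3) 3)ᶜ) :=
  stmt18_general p hp hV G hfree hsize
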